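/- arXiv:1810.12811 — 3 statements merged into one kernel-verified Lean document; each statement's English description precedes it below -/
import Mathlib

section
/- Let η have reduced Witt index n ≥ 2 and singular defect d, with fixed decomposition V = V̄ ⊕ R where R = Rad(η) has dimension d and V̄ := V₁ ⊕ ⋯ ⊕ Vₙ ⊕ V₀. For 0 ≤ j let Ḡ_j denote the subspace of ⋀^j V̄ ⊆ ⋀^j V spanned by all pure wedges of bases of totally singular j-dimensional subspaces of V̄, with Ḡ₀ := F (the scalars in ⋀⁰V). Then for every 1 ≤ k ≤ n, G_k(η) = ⊕_{i=0}^{min(d,k)} Ḡ_{k−i} ∧ ⋀^i R, where Ḡ_{k−i} ∧ ⋀^i R denotes the span in ⋀^k V of all wedges u ∧ w with u ∈ Ḡ_{k−i} and w ∈ ⋀^i R, and the sum is direct. -/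
/-!
Write `V = Ū ⊕ R` with `Ū = V₁ ⊕ ⋯ ⊕ Vₙ ⊕ V₀` and `R` the radical. Total singularity passes to
subspaces, holds on `R` and survives adding `R`. Hence if `v₁, …, v_k` is a basis of a totally
singular space and `vₜ = uₜ + rₜ` with `uₜ ∈ Ū`, `rₜ ∈ R`, then `T = span {uₜ}` is a totally
singular subspace of `Ū`, and expanding `v₁ ∧ ⋯ ∧ v_k` multilinearly puts it in
`∑ᵢ ⋀^{k-i} T ∧ ⋀^i R ⊆ ∑ᵢ Ḡ_{k-i} ∧ ⋀^i R`, the terms with `i > d` vanishing. Conversely a totally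
singular basis of a subspace of `Ū` wedged with vectors of `R` spans a totally singular space.
The sum is direct because, for a basis of `V` adapted to `Ū ⊕ R`, the `i`-th summand lies in the
span of the basis wedges with exactly `i` factors from `R`.
-/

noncomputable section

namespace PolarGrass

open Module

variable (F : Type*) [Field F] (V : Type*) [AddCommGroup V] [Module F V]

/-- A subspace `W` is totally singular for the pairing `B` if `B` vanishes identically on it. -/
def TotSingB (B : V → V → F) (W : Submodule F V) : Prop :=
  ∀ x ∈ W, ∀ y ∈ W, B x y = 0

/-- A subspace `W` is totally singular for the quadratic form `q` if `q` vanishes on it. -/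
def TotSingQ (q : QuadraticForm F V) (W : Submodule F V) : Prop :=
  ∀ x ∈ W, q x = 0

/-- The polarization of a quadratic form, as a bare pairing. -/
def polarF (q : QuadraticForm F V) : V → V → F :=
  fun x y => QuadraticMap.polar (⇑q) x y

/-- The subspace of the `k`-th exterior power of `V` spanned by the pure wedges
`v₁ ∧ ⋯ ∧ v_k` where `v₁, …, v_k` is a basis of a `k`-dimensional subspace satisfying `P`,
all of whose vectors lie in `U`. -/
def grassmannIn (P : Submodule F V → Prop) (U : Submodule F V) (k : ℕ) :
    Submodule F (ExteriorAlgebra F V) :=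
  Submodule.span F {x | ∃ v : Fin k → V, (∀ t, v t ∈ U) ∧ LinearIndependent F v ∧
    P (Submodule.span F (Set.range v)) ∧ x = ExteriorAlgebra.ιMulti F k v}

/-- The Grassmann image: the subspace of the `k`-th exterior power of `V` spanned by the
pure wedges of bases of `k`-dimensional subspaces of `V` satisfying `P`. -/
def grassmann (P : Submodule F V → Prop) (k : ℕ) : Submodule F (ExteriorAlgebra F V) :=
  grassmannIn F V P ⊤ k

/-- `B` is a `σ`-Hermitian form. -/
def IsHermitianForm (σ : F ≃+* F) (B : V → V → F) : Prop :=
  (∀ x y z : V, B (x + y) z = B x z + B y z) ∧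
  (∀ x y z : V, B x (y + z) = B x y + B x z) ∧
  (∀ (a b : F) (x y : V), B (a • x) (b • y) = σ a * b * B x y) ∧
  (∀ x y : V, B y x = σ (B x y))

/-- `B` is an alternating bilinear form. -/
def IsAlternatingForm (B : V → V → F) : Prop :=
  (∀ x y z : V, B (x + y) z = B x z + B y z) ∧
  (∀ x y z : V, B x (y + z) = B x y + B x z) ∧
  (∀ (a : F) (x y : V), B (a • x) y = a * B x y) ∧
  (∀ (a : F) (x y : V), B x (a • y) = a * B x y) ∧
  (∀ x : V, B x x = 0)

/-- `V` is the orthogonal (w.r.t. the pairing `B`) direct sum of the subspaces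
`W 0, …, W (n-1), W₀, R`, where each `W i` is a hyperbolic plane (spanned by two singular
vectors pairing to `1`, singularity being measured by `sv`), `W₀` is anisotropic of
dimension `d₀` (it contains no nonzero singular vector) and `R` is the radical
(given as the set `RadSet`) and has dimension `d`. -/
def IsWittDecomp (B : V → V → F) (sv : V → Prop) (RadSet : Set V) (n d₀ d : ℕ)
    (W : Fin n → Submodule F V) (W₀ R : Submodule F V) : Prop :=
  DirectSum.IsInternal (Sum.elim W ![W₀, R]) ∧
  (∀ j j' : Fin n ⊕ Fin 2, j ≠ j' →
    ∀ x ∈ Sum.elim W ![W₀, R] j, ∀ y ∈ Sum.elim W ![W₀, R] j', B x y = 0) ∧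
  (∀ i : Fin n, ∃ e f : V, W i = Submodule.span F {e, f} ∧ sv e ∧ sv f ∧ B e f = 1) ∧
  (∀ v ∈ W₀, v ≠ 0 → ¬ sv v) ∧
  Module.finrank F W₀ = d₀ ∧
  (R : Set V) = RadSet ∧
  Module.finrank F R = d

/-- There is a Witt decomposition of `V` as above: `B` has reduced Witt index `n`,
anisotropic defect `d₀` and singular defect `d`. -/
def HasWittDecomp (B : V → V → F) (sv : V → Prop) (RadSet : Set V) (n d₀ d : ℕ) : Prop :=
  ∃ (W : Fin n → Submodule F V) (W₀ R : Submodule F V),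
    IsWittDecomp F V B sv RadSet n d₀ d W W₀ R

/-- The radical (as a set) of a sesquilinear/bilinear pairing. -/
def radSetB (B : V → V → F) : Set V := {v | ∀ w, B v w = 0}

/-- The radical (as a set) of a quadratic form. -/
def radSetQ (q : QuadraticForm F V) : Set V :=
  {v | q v = 0 ∧ ∀ w, polarF F V q v w = 0}

/-- The image of `⋀^i U` inside the exterior algebra of `V`: the span of the pure wedges of
`i`-tuples of vectors of `U`. -/
def extPowOf (U : Submodule F V) (i : ℕ) : Submodule F (ExteriorAlgebra F V) :=
  Submodule.span F {x | ∃ v : Fin i → V, (∀ t, v t ∈ U) ∧ x = ExteriorAlgebra.ιMulti F i v}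

/-- `Ḡ_j`: for `j ≥ 1` the span of the pure wedges of bases of `j`-dimensional subspaces of
`U` satisfying `P`; for `j = 0` the scalars `F ⊆ ⋀^0 V`. -/
def gbar (P : Submodule F V → Prop) (U : Submodule F V) : ℕ → Submodule F (ExteriorAlgebra F V)
  | 0 => 1
  | (j + 1) => grassmannIn F V P U (j + 1)

end PolarGrass

namespace Submodule

theorem mul_pow_le_pow_mul {R A : Type*} [CommSemiring R] [Semiring A] [Algebra R A]
    {P Q : Submodule R A} (hQP : Q * P ≤ P * Q) (j : ℕ) : Q * P ^ j ≤ P ^ j * Q := by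
  induction j with
  | zero => simp
  | succ j ih =>
    calc Q * P ^ (j + 1) = Q * P ^ j * P := by rw [pow_succ, mul_assoc]
      _ ≤ P ^ j * Q * P := mul_le_mul' ih le_rfl
      _ ≤ P ^ j * (P * Q) := by rw [mul_assoc]; exact mul_le_mul' le_rfl hQP
      _ = P ^ (j + 1) * Q := by rw [pow_succ, mul_assoc]

theorem sup_pow_le_iSup {R A : Type*} [CommSemiring R] [Semiring A] [Algebra R A]
    {P Q : Submodule R A} (hQP : Q * P ≤ P * Q) (k : ℕ) :
    (P ⊔ Q) ^ k ≤ ⨆ i : Fin (k + 1), P ^ (k - i) * Q ^ (i : ℕ) := by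
  induction k with
  | zero => exact le_iSup_of_le 0 (by simp)
  | succ k ih =>
    calc (P ⊔ Q) ^ (k + 1) ≤ (P ⊔ Q) * ⨆ i : Fin (k + 1), P ^ (k - i) * Q ^ (i : ℕ) := by
          rw [pow_succ']; exact mul_le_mul' le_rfl ih
      _ = ⨆ i : Fin (k + 1),
            (P * (P ^ (k - i) * Q ^ (i : ℕ)) ⊔ Q * (P ^ (k - i) * Q ^ (i : ℕ))) := by
          simp only [mul_iSup, sup_mul]
      _ ≤ _ := iSup_le fun i => sup_le ?_ ?_
    · refine le_iSup_of_le i.castSucc (le_of_eq ?_)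
      rw [← mul_assoc, ← pow_succ', Fin.val_castSucc, Nat.sub_add_comm (by omega)]
    · refine le_iSup_of_le i.succ ?_
      calc Q * (P ^ (k - i) * Q ^ (i : ℕ)) ≤ P ^ (k - i) * Q * Q ^ (i : ℕ) := by
            rw [← mul_assoc]; exact mul_le_mul' (mul_pow_le_pow_mul hQP _) le_rfl
        _ = _ := by rw [mul_assoc, ← pow_succ', Fin.val_succ, Nat.add_sub_add_right]

end Submodule

theorem LinearIndependent.iSupIndep_span_image {R M ι κ : Type*} [Ring R] [Nontrivial R]
    [AddCommGroup M] [Module R M] {w : ι → M} (hw : LinearIndependent R w) {A : κ → Set ι}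
    (hA : Pairwise (Function.onFun Disjoint A)) :
    iSupIndep fun i => Submodule.span R (w '' A i) := by
  intro i
  have hle : (⨆ (j) (_ : j ≠ i), Submodule.span R (w '' A j))
      ≤ Submodule.span R (w '' ⋃ (j) (_ : j ≠ i), A j) :=
    iSup₂_le fun j hj => Submodule.span_mono (Set.image_mono (Set.subset_biUnion_of_mem hj))
  refine Disjoint.mono_right hle (hw.disjoint_span_image ?_)
  exact Set.disjoint_iUnion₂_right.2 fun j hj => hA (Ne.symm hj)

namespace PolarGrass

open Module ExteriorAlgebra Set.powersetCard

variable {F V : Type*} [Field F] [AddCommGroup V] [Module F V]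

/-- Abstracts total singularity for the three kinds of forms, `R` being the radical. -/
structure SingularFamily (Sing : Submodule F V → Prop) (R : Submodule F V) : Prop where
  anti : ∀ ⦃U U' : Submodule F V⦄, U ≤ U' → Sing U' → Sing U
  radical : Sing R
  sup_radical : ∀ {T : Submodule F V}, Sing T → Sing (T ⊔ R)

theorem singularFamily_totSingB {B : V → V → F}
    (hadd_left : ∀ x y z, B (x + y) z = B x z + B y z)
    (hadd_right : ∀ x y z, B x (y + z) = B x y + B x z)
    {R : Submodule F V} (hR : ∀ r ∈ R, ∀ w, B r w = 0 ∧ B w r = 0) :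
    SingularFamily (TotSingB F V B) R where
  anti _ _ hUU' hU' x hx y hy := hU' x (hUU' hx) y (hUU' hy)
  radical x hx y _ := (hR x hx y).1
  sup_radical {T} hT x hx y hy := by
    obtain ⟨t, ht, r, hr, rfl⟩ := Submodule.mem_sup.1 hx
    obtain ⟨t', ht', r', hr', rfl⟩ := Submodule.mem_sup.1 hy
    rw [hadd_left, hadd_right, hadd_right, hT t ht t' ht', (hR r hr _).1, (hR r hr _).1,
      (hR r' hr' t).2]
    simp

theorem singularFamily_totSingQ (q : QuadraticForm F V) {R : Submodule F V}
    (hR : ∀ r ∈ R, q r = 0 ∧ ∀ w, QuadraticMap.polar q r w = 0) :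
    SingularFamily (TotSingQ F V q) R where
  anti _ _ hUU' hU' x hx := hU' x (hUU' hx)
  radical r hr := (hR r hr).1
  sup_radical {T} hT x hx := by
    obtain ⟨t, ht, r, hr, rfl⟩ := Submodule.mem_sup.1 hx
    rw [QuadraticMap.map_add q, hT t ht, (hR r hr).1, QuadraticMap.polar_comm, (hR r hr).2]
    simp

theorem singularFamily_of_isHermitianForm {σ : F ≃+* F} {h : V → V → F}
    (hh : IsHermitianForm F V σ h) {R : Submodule F V} (hR : (R : Set V) = radSetB F V h) :
    SingularFamily (TotSingB F V h) R := by
  obtain ⟨hadd_left, hadd_right, -, hsymm⟩ := hh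
  refine singularFamily_totSingB hadd_left hadd_right fun r hr w => ?_
  have hr : ∀ w, h r w = 0 := by rw [← SetLike.mem_coe, hR] at hr; exact hr
  exact ⟨hr w, by rw [hsymm, hr, map_zero]⟩

theorem singularFamily_of_isAlternatingForm {s : V → V → F}
    (hs : IsAlternatingForm F V s) {R : Submodule F V} (hR : (R : Set V) = radSetB F V s) :
    SingularFamily (TotSingB F V s) R := by
  obtain ⟨hadd_left, hadd_right, -, -, halt⟩ := hs
  refine singularFamily_totSingB hadd_left hadd_right fun r hr w => ?_
  have hr : ∀ w, s r w = 0 := by rw [← SetLike.mem_coe, hR] at hr; exact hr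
  refine ⟨hr w, ?_⟩
  have hexp := halt (w + r)
  rw [hadd_left, hadd_right, hadd_right, halt, halt, hr] at hexp
  simpa using hexp

theorem singularFamily_of_quadraticForm (q : QuadraticForm F V) {R : Submodule F V}
    (hR : (R : Set V) = radSetQ F V q) : SingularFamily (TotSingQ F V q) R :=
  singularFamily_totSingQ q fun r hr => by rw [← SetLike.mem_coe, hR] at hr; exact hr

theorem extPowOf_eq_pow (U : Submodule F V) (i : ℕ) :
    extPowOf F V U i = U.map (ι F) ^ i := by
  rw [Submodule.pow_eq_span_pow_set, extPowOf]
  congr 1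
  ext x
  rw [Set.mem_pow]
  constructor
  · rintro ⟨v, hv, rfl⟩
    exact ⟨fun t => ⟨ι F (v t), Submodule.mem_map_of_mem (hv t)⟩, rfl⟩
  · rintro ⟨f, rfl⟩
    choose v hv hvf using fun t => Submodule.mem_map.1 (f t).2
    exact ⟨v, hv, by simp [ιMulti_apply, hvf]⟩

theorem extPowOf_eq_bot_of_finrank_lt {U : Submodule F V} [Module.Finite F U] {i : ℕ}
    (hi : finrank F U < i) : extPowOf F V U i = ⊥ := by
  rw [eq_bot_iff, extPowOf, Submodule.span_le]
  rintro x ⟨v, hv, rfl⟩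
  have hdep : ¬ LinearIndependent F v := fun hind => by
    have := (LinearIndependent.of_comp U.subtype (v := fun t => (⟨v t, hv t⟩ : U))
      hind).fintype_card_le_finrank
    rw [Fintype.card_fin] at this
    omega
  simp [AlternatingMap.map_linearDependent _ _ hdep]

theorem map_ι_mul_map_ι_le (M N : Submodule F V) :
    N.map (ι F) * M.map (ι F) ≤ M.map (ι F) * N.map (ι F) := by
  rw [Submodule.mul_le]
  rintro _ ⟨y, hy, rfl⟩ _ ⟨x, hx, rfl⟩
  have hanti : ι F y * ι F x = -(ι F x * ι F y) := by
    have := ι_add_mul_swap (R := F) x y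
    linear_combination (norm := noncomm_ring) this
  rw [hanti]
  exact neg_mem
    (Submodule.mul_mem_mul (Submodule.mem_map_of_mem hx) (Submodule.mem_map_of_mem hy))

theorem extPowOf_sup_le (M N : Submodule F V) (k : ℕ) :
    extPowOf F V (M ⊔ N) k ≤ ⨆ i : Fin (k + 1), extPowOf F V M (k - i) * extPowOf F V N i := by
  simp only [extPowOf_eq_pow, Submodule.map_sup]
  exact Submodule.sup_pow_le_iSup (map_ι_mul_map_ι_le M N) k

theorem ιMulti_mem_grassmannIn {P : Submodule F V → Prop} {U : Submodule F V} {k : ℕ}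
    {v : Fin k → V} (hv : ∀ t, v t ∈ U) (hP : P (Submodule.span F (Set.range v))) :
    ιMulti F k v ∈ grassmannIn F V P U k := by
  by_cases hind : LinearIndependent F v
  · exact Submodule.subset_span ⟨v, hv, hind, hP, rfl⟩
  · simp [AlternatingMap.map_linearDependent _ _ hind]

theorem gbar_le_extPowOf (Sing : Submodule F V → Prop) (U : Submodule F V) (j : ℕ) :
    gbar F V Sing U j ≤ extPowOf F V U j := by
  cases j with
  | zero => rw [extPowOf_eq_pow, pow_zero]; rfl
  | succ j =>
    refine Submodule.span_le.2 ?_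
    rintro _ ⟨v, hv, -, -, rfl⟩
    exact Submodule.subset_span ⟨v, hv, rfl⟩

section Grassmann

variable {Sing : Submodule F V → Prop} {R : Submodule F V}

theorem extPowOf_le_gbar (hanti : ∀ ⦃U U' : Submodule F V⦄, U ≤ U' → Sing U' → Sing U)
    {T U : Submodule F V} (hTU : T ≤ U) (hT : Sing T) (j : ℕ) :
    extPowOf F V T j ≤ gbar F V Sing U j := by
  cases j with
  | zero => rw [extPowOf_eq_pow, pow_zero]; rfl
  | succ j =>
    refine Submodule.span_le.2 ?_
    rintro _ ⟨v, hv, rfl⟩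
    exact ιMulti_mem_grassmannIn (fun t => hTU (hv t))
      (hanti (Submodule.span_le.2 (Set.range_subset_iff.2 hv)) hT)

theorem gbar_mul_extPowOf_le_grassmann (hS : SingularFamily Sing R) (U : Submodule F V)
    {a b c : ℕ} (habc : a + b = c) :
    gbar F V Sing U a * extPowOf F V R b ≤ grassmann F V Sing c := by
  subst habc
  cases a with
  | zero =>
    rw [gbar, one_mul, zero_add]
    refine Submodule.span_le.2 ?_
    rintro _ ⟨r, hr, rfl⟩
    exact ιMulti_mem_grassmannIn (fun _ => trivial)
      (hS.anti (Submodule.span_le.2 (Set.range_subset_iff.2 hr)) hS.radical)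
  | succ a =>
    rw [gbar, grassmannIn, extPowOf, Submodule.span_mul_span, Submodule.span_le]
    rintro _ ⟨_, ⟨u, -, -, hu, rfl⟩, _, ⟨r, hr, rfl⟩, rfl⟩
    beta_reduce
    rw [SetLike.mem_coe, ιMulti_mul_ιMulti]
    refine ιMulti_mem_grassmannIn (fun _ => trivial) (hS.anti ?_ (hS.sup_radical hu))
    rw [Submodule.span_le, Set.range_subset_iff]
    intro t
    induction t using Fin.addCases with
    | left t =>
      exact Submodule.mem_sup_left (Submodule.subset_span ⟨t, (Fin.append_left _ _ _).symm⟩)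
    | right t => rw [Fin.append_right]; exact Submodule.mem_sup_right (hr t)

theorem grassmann_le_iSup (hS : SingularFamily Sing R) {U : Submodule F V} (hUR : U ⊔ R = ⊤)
    [Module.Finite F R] (k : ℕ) :
    grassmann F V Sing k ≤ ⨆ i : Fin (min (finrank F R) k + 1),
      gbar F V Sing U (k - i) * extPowOf F V R i := by
  refine Submodule.span_le.2 ?_
  rintro _ ⟨v, -, -, hv, rfl⟩
  have hvUR (t : Fin k) : v t ∈ U ⊔ R := hUR ▸ Submodule.mem_top
  choose u hu r hr huv using fun t => Submodule.mem_sup.1 (hvUR t)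
  set T := Submodule.span F (Set.range u)
  have hT : Sing T := by
    refine hS.anti (Submodule.span_le.2 (Set.range_subset_iff.2 fun t => ?_)) (hS.sup_radical hv)
    rw [eq_sub_of_add_eq (huv t)]
    exact sub_mem (Submodule.mem_sup_left (Submodule.subset_span ⟨t, rfl⟩))
      (Submodule.mem_sup_right (hr t))
  have hvTR : ιMulti F k v ∈ extPowOf F V (T ⊔ R) k := by
    refine Submodule.subset_span ⟨v, fun t => ?_, rfl⟩
    rw [← huv t]
    exact add_mem (Submodule.mem_sup_left (Submodule.subset_span ⟨t, rfl⟩))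
      (Submodule.mem_sup_right (hr t))
  refine (extPowOf_sup_le T R k).trans (iSup_le fun i => ?_) hvTR
  by_cases hi : (i : ℕ) ≤ finrank F R
  · refine le_iSup_of_le ⟨i, by omega⟩ (mul_le_mul' ?_ le_rfl)
    exact extPowOf_le_gbar hS.anti (Submodule.span_le.2 (Set.range_subset_iff.2 hu)) hT _
  · rw [extPowOf_eq_bot_of_finrank_lt (U := R) (by omega), Submodule.mul_bot]
    exact bot_le

end Grassmann

section BasisWedges

variable {I : Type*} [LinearOrder I] (v : I → V)

theorem span_ιMulti_family_mul_span_le {m n : ℕ} (A : Set (Set.powersetCard I m))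
    (B : Set (Set.powersetCard I n)) :
    Submodule.span F (ιMulti_family F m v '' A) * Submodule.span F (ιMulti_family F n v '' B)
      ≤ Submodule.span F (ιMulti_family F (m + n) v ''
        {s | ∃ a ∈ A, ∃ b ∈ B, ∃ h : Disjoint a.val b.val, s = disjUnion h}) := by
  rw [Submodule.span_mul_span, Submodule.span_le]
  rintro _ ⟨_, ⟨a, ha, rfl⟩, _, ⟨b, hb, rfl⟩, rfl⟩
  beta_reduce
  by_cases h : Disjoint a.val b.val
  · rw [SetLike.mem_coe, ιMulti_family_mul_of_disjoint _ _ _ _ h, Units.smul_def]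
    exact Submodule.smul_of_tower_mem _ _ (Submodule.subset_span ⟨_, ⟨a, ha, b, hb, h, rfl⟩, rfl⟩)
  · rw [SetLike.mem_coe, ιMulti_family_mul_of_not_disjoint _ _ _ _ h]
    exact zero_mem _

theorem extPowOf_le_span_ιMulti_family {S : Set I} {U : Submodule F V}
    (hU : U ≤ Submodule.span F (v '' S)) (a : ℕ) :
    extPowOf F V U a ≤ Submodule.span F (ιMulti_family F a v '' {s | (s.val : Set I) ⊆ S}) := by
  induction a with
  | zero =>
    rw [extPowOf_eq_pow, pow_zero, Submodule.one_le]
    exact Submodule.subset_span ⟨ofCard (Finset.card_empty (α := I)),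
      by simp only [Set.mem_ofPred_eq, val_ofCard, Finset.coe_empty, Set.empty_subset], by simp⟩
  | succ a ih =>
    have hι : U.map (ι F) ≤
        Submodule.span F (ιMulti_family F 1 v '' {s | (s.val : Set I) ⊆ S}) := by
      refine (Submodule.map_mono hU).trans ?_
      rw [Submodule.map_span, Submodule.span_le]
      rintro _ ⟨_, ⟨j, hj, rfl⟩, rfl⟩
      have h0 : ofFinEmbEquiv.symm (ofCard (Finset.card_singleton j)) 0 = j := by
        have h := (mem_range_ofFinEmbEquiv_symm_iff_mem (ofCard (Finset.card_singleton j)) _).1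
          ⟨0, rfl⟩
        rwa [← mem_coe_iff, val_ofCard, Finset.mem_singleton] at h
      refine Submodule.subset_span ⟨ofCard (Finset.card_singleton j), ?_, ?_⟩
      · simpa only [Set.mem_ofPred_eq, val_ofCard, Finset.coe_singleton, Set.singleton_subset_iff]
      · simp [ιMulti_family, h0]
    rw [extPowOf_eq_pow, pow_succ, ← extPowOf_eq_pow]
    refine (mul_le_mul' ih hι).trans ((span_ιMulti_family_mul_span_le v _ _).trans ?_)
    refine Submodule.span_mono (Set.image_mono ?_)
    rintro _ ⟨s, hs, t, ht, hst, rfl⟩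
    simp only [Set.mem_ofPred_eq, coe_disjUnion, Finset.disjUnion_eq_union, Finset.coe_union] at *
    exact Set.union_subset hs ht

theorem extPowOf_mul_extPowOf_le_span {S : Set I} {U R : Submodule F V}
    (hU : U ≤ Submodule.span F (v '' S)) (hR : R ≤ Submodule.span F (v '' Sᶜ))
    {a c n : ℕ} (h : a + c = n) :
    extPowOf F V U a * extPowOf F V R c ≤
      Submodule.span F (ιMulti_family F n v '' {s | ((s.val : Set I) ∩ Sᶜ).ncard = c}) := by
  subst h
  refine (mul_le_mul' (extPowOf_le_span_ιMulti_family v hU a)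
    (extPowOf_le_span_ιMulti_family v hR c)).trans ((span_ιMulti_family_mul_span_le v _ _).trans
    (Submodule.span_mono (Set.image_mono ?_)))
  rintro _ ⟨s, hs, t, ht, hst, rfl⟩
  simp only [Set.mem_ofPred_eq, coe_disjUnion, Finset.disjUnion_eq_union, Finset.coe_union] at *
  have hinter : ((s.val : Set I) ∪ t.val) ∩ Sᶜ = t.val := by
    ext x
    constructor
    · rintro ⟨hx | hx, hxS⟩
      exacts [absurd (hs hx) hxS, hx]
    · exact fun hx => ⟨Or.inr hx, ht hx⟩
  rw [hinter, Set.ncard_coe_finset, t.prop]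

theorem iSupIndep_extPowOf_mul_of_basis (b : Basis I F V) {S : Set I} {U R : Submodule F V}
    (hU : U ≤ Submodule.span F (b '' S)) (hR : R ≤ Submodule.span F (b '' Sᶜ)) (k : ℕ) :
    iSupIndep fun i : Fin (k + 1) => extPowOf F V U (k - i) * extPowOf F V R i := by
  have hw : LinearIndependent F (ιMulti_family F k b) := by
    rw [exteriorPower.ιMulti_family_eq_coe_comp]
    exact (exteriorPower.ιMulti_family_linearIndependent_ofBasis F k b).map' _
      (Submodule.ker_subtype _)
  refine (hw.iSupIndep_span_image
    (A := fun i : Fin (k + 1) => {s | ((s.val : Set I) ∩ Sᶜ).ncard = i}) ?_).mono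
    fun i => extPowOf_mul_extPowOf_le_span b hU hR (Nat.sub_add_cancel i.is_le)
  exact fun i j hij => Set.disjoint_left.2 fun s hi hj => hij (Fin.ext (hi.symm.trans hj))

end BasisWedges

theorem iSupIndep_extPowOf_mul {U R : Submodule F V} (h : IsCompl U R) (k : ℕ) :
    iSupIndep fun i : Fin (k + 1) => extPowOf F V U (k - i) * extPowOf F V R i := by
  classical
  let bU := Basis.ofVectorSpace F U
  let bR := Basis.ofVectorSpace F R
  let b := (bU.prod bR).map (U.prodEquivOfIsCompl R h)
  -- any linear order will do: it only serves to enumerate the basis wedges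
  let : LinearOrder (Basis.ofVectorSpaceIndex F U ⊕ Basis.ofVectorSpaceIndex F R) :=
    linearOrderOfSTO WellOrderingRel
  have hinl : ⇑b ∘ Sum.inl = U.subtype ∘ bU := by ext; simp [b]
  have hinr : ⇑b ∘ Sum.inr = R.subtype ∘ bR := by ext; simp [b]
  refine iSupIndep_extPowOf_mul_of_basis b (S := Set.range Sum.inl) ?_ ?_ k
  · rw [← Set.range_comp, hinl, Set.range_comp, ← Submodule.map_span, bU.span_eq,
      Submodule.map_top, Submodule.range_subtype]
  · rw [Set.compl_range_inl, ← Set.range_comp, hinr, Set.range_comp, ← Submodule.map_span,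
      bR.span_eq, Submodule.map_top, Submodule.range_subtype]

theorem isCompl_iSup_sup_of_isInternal {n : ℕ} {W : Fin n → Submodule F V} {W₀ R : Submodule F V}
    (h : DirectSum.IsInternal (Sum.elim W ![W₀, R])) : IsCompl ((⨆ j, W j) ⊔ W₀) R := by
  have hle : (⨆ j, W j) ⊔ W₀ ≤ ⨆ (i) (_ : i ≠ Sum.inr 1), Sum.elim W ![W₀, R] i :=
    sup_le (iSup_le fun j => le_iSup₂_of_le (Sum.inl j) Sum.inl_ne_inr le_rfl)
      (le_iSup₂_of_le (Sum.inr 0) (by simp) le_rfl)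
  refine ⟨(h.submodule_iSupIndep (Sum.inr 1)).symm.mono_left hle,
    codisjoint_iff.2 (eq_top_iff.2 ?_)⟩
  rw [← h.submodule_iSup_eq_top]
  refine iSup_le fun i => ?_
  rcases i with j | i
  · exact le_sup_of_le_left (le_sup_of_le_left (le_iSup W j))
  · fin_cases i
    exacts [le_sup_of_le_left le_sup_right, le_sup_right]

end PolarGrass

open PolarGrass Module in
theorem stmt7_general (F : Type*) [Field F] (V : Type*) [AddCommGroup V] [Module F V]
    [FiniteDimensional F V]
    (Orth : V → V → F) (sv : V → Prop) (Sing : Submodule F V → Prop) (RadSet : Set V)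
    (hcase :
      (∃ (σ : F ≃+* F) (h : V → V → F), (∀ a, σ (σ a) = a) ∧ IsHermitianForm F V σ h ∧
        Orth = h ∧ sv = (fun v => h v v = 0) ∧ Sing = TotSingB F V h ∧
        RadSet = radSetB F V h) ∨
      (∃ s : V → V → F, IsAlternatingForm F V s ∧ Orth = s ∧
        sv = (fun v => s v v = 0) ∧ Sing = TotSingB F V s ∧ RadSet = radSetB F V s) ∨
      (∃ q : QuadraticForm F V, Orth = polarF F V q ∧ sv = (fun v => q v = 0) ∧
        Sing = TotSingQ F V q ∧ RadSet = radSetQ F V q))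
    (n d₀ d : ℕ)
    (W : Fin n → Submodule F V) (W₀ R : Submodule F V)
    (hdec : IsWittDecomp F V Orth sv RadSet n d₀ d W W₀ R) :
    ∀ k : ℕ, 1 ≤ k → k ≤ n →
      grassmann F V Sing k
        = (⨆ i : Fin (min d k + 1),
            gbar F V Sing ((⨆ j, W j) ⊔ W₀) (k - (i : ℕ)) * extPowOf F V R (i : ℕ)) ∧
      iSupIndep (fun i : Fin (min d k + 1) =>
        gbar F V Sing ((⨆ j, W j) ⊔ W₀) (k - (i : ℕ)) * extPowOf F V R (i : ℕ)) := by
  intro k _ _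
  obtain ⟨hint, -, -, -, -, hRrad, rfl⟩ := hdec
  have hS : SingularFamily Sing R := by
    rcases hcase with ⟨σ, h, -, hh, -, -, rfl, rfl⟩ | ⟨s, hs, -, -, rfl, rfl⟩ | ⟨q, -, -, rfl, rfl⟩
    exacts [singularFamily_of_isHermitianForm hh hRrad,
      singularFamily_of_isAlternatingForm hs hRrad, singularFamily_of_quadraticForm q hRrad]
  have hUR := isCompl_iSup_sup_of_isInternal hint
  refine ⟨le_antisymm (grassmann_le_iSup hS hUR.sup_eq_top k) (iSup_le fun i =>
    gbar_mul_extPowOf_le_grassmann hS _ (Nat.sub_add_cancel (by omega))), ?_⟩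
  refine ((iSupIndep_extPowOf_mul hUR k).comp (Fin.castLE_injective (by omega))).mono
    fun i => mul_le_mul' (gbar_le_extPowOf _ _ _) le_rfl

open PolarGrass Module in
/-- with a fixed Witt decomposition `V = V̄ ⊕ R`, `V̄ = V₁ ⊕ ⋯ ⊕ Vₙ ⊕ V₀`,
for `1 ≤ k ≤ n` the Grassmann image decomposes as the direct sum
`⊕_{i=0}^{min(d,k)} Ḡ_{k-i} ∧ ⋀^i R`. -/
theorem stmt7 (F : Type*) [Field F] (V : Type*) [AddCommGroup V] [Module F V]
    [FiniteDimensional F V]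
    (Orth : V → V → F) (sv : V → Prop) (Sing : Submodule F V → Prop) (RadSet : Set V)
    (hcase :
      (∃ (σ : F ≃+* F) (h : V → V → F), (∀ a, σ (σ a) = a) ∧ IsHermitianForm F V σ h ∧
        Orth = h ∧ sv = (fun v => h v v = 0) ∧ Sing = TotSingB F V h ∧
        RadSet = radSetB F V h) ∨
      (∃ s : V → V → F, IsAlternatingForm F V s ∧ Orth = s ∧
        sv = (fun v => s v v = 0) ∧ Sing = TotSingB F V s ∧ RadSet = radSetB F V s) ∨
      (∃ q : QuadraticForm F V, Orth = polarF F V q ∧ sv = (fun v => q v = 0) ∧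
        Sing = TotSingQ F V q ∧ RadSet = radSetQ F V q))
    (n d₀ d : ℕ) (hn : 2 ≤ n)
    (W : Fin n → Submodule F V) (W₀ R : Submodule F V)
    (hdec : IsWittDecomp F V Orth sv RadSet n d₀ d W W₀ R) :
    ∀ k : ℕ, 1 ≤ k → k ≤ n →
      grassmann F V Sing k
        = (⨆ i : Fin (min d k + 1),
            gbar F V Sing ((⨆ j, W j) ⊔ W₀) (k - (i : ℕ)) * extPowOf F V R (i : ℕ)) ∧
      iSupIndep (fun i : Fin (min d k + 1) =>
        gbar F V Sing ((⨆ j, W j) ⊔ W₀) (k - (i : ℕ)) * extPowOf F V R (i : ℕ)) :=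
  stmt7_general F V Orth sv Sing RadSet hcase n d₀ d W W₀ R hdec
end
end

section
/- Suppose h is non-degenerate with N = 2n and Witt index n ≥ 2 (anisotropic defect 0), i.e., V is an h-orthogonal direct sum of n hyperbolic planes. Then for every integer k with 1 ≤ k ≤ n, the Grassmann image G_k(h) equals all of ⋀^k V. -/
noncomputable section

/-!
Pick a hyperbolic basis `e₁, f₁, …, eₙ, fₙ`; then `⋀^k V` is spanned by wedges of `k` basis
vectors. Such a wedge is non-singular only through planes `i` from which it takes both `eᵢ` and
`fᵢ`, and since `k ≤ n` it leaves at least that many planes untouched.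

Let `u, w` be two entries of a wedge of singular vectors with `γ = h u w ≠ 0`, and let `(e, f)`
be a hyperbolic pair orthogonal to all entries. Replacing `u, w` by `u + a • f` and
`w - γ σ(a)⁻¹ • e` makes that pair orthogonal and creates no new non-orthogonal pair. Expanding
multilinearly, the shifted wedge is the original one, plus two wedges (`w ↦ e`, resp. `u ↦ f`)
with fewer non-orthogonal pairs, plus `-γ a σ(a)⁻¹` times the wedge with `u ↦ f, w ↦ e`. As
`σ ≠ id`, the choices `a = 1` and `a = τ` with `σ τ ≠ τ` give different coefficients, so that
last wedge cancels. Induction on the number of non-orthogonal pairs, spending one untouched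
plane per step, ends at totally singular wedges.
-/

open Function

theorem AlternatingMap.map_update_add_smul_update_add_smul {R M N ι : Type*} [CommSemiring R]
    [AddCommMonoid M] [Module R M] [AddCommMonoid N] [Module R N] [DecidableEq ι]
    (f : M [⋀^ι]→ₗ[R] N) (v : ι → M) {i j : ι} (hij : i ≠ j) (a b : R) (x y : M) :
    f (update (update v i (v i + a • x)) j (v j + b • y)) =
      f v + a • f (update v i x) + b • f (update v j y) +
        (a * b) • f (update (update v i x) j y) := by
  have expand (w : ι → M) (l : ι) (c : R) (z : M) :
      f (update w l (w l + c • z)) = f w + c • f (update w l z) := by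
    rw [f.map_update_add, f.map_update_smul, update_eq_self]
  have hfirst : f (update (update v i (v i + a • x)) j (v j + b • y)) =
      f (update v i (v i + a • x)) + b • f (update (update v i (v i + a • x)) j y) := by
    rw [← update_of_ne hij.symm (v i + a • x) v, expand]
  have hsecond : f (update (update v i (v i + a • x)) j y) =
      f (update v j y) + a • f (update (update v i x) j y) := by
    rw [update_comm hij, ← update_of_ne hij y v, expand, update_comm hij.symm]
  rw [hfirst, hsecond, expand, smul_add, smul_smul, mul_comm b a]
  abel

theorem Submodule.mem_of_add_smul_mem_of_add_smul_mem {K M : Type*} [Field K] [AddCommGroup M]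
    [Module K M] {p : Submodule K M} {x z : M} {a b : K} (hab : a ≠ b)
    (ha : x + a • z ∈ p) (hb : x + b • z ∈ p) : x ∈ p := by
  have hx : x = (b - a)⁻¹ • (b • (x + a • z) - a • (x + b • z)) := by
    rw [smul_add, smul_add, smul_smul, smul_smul, mul_comm b a, add_sub_add_right_eq_sub,
      ← sub_smul, smul_smul, inv_mul_cancel₀ (sub_ne_zero.2 hab.symm), one_smul]
  rw [hx]
  exact p.smul_mem _ (p.sub_mem (p.smul_mem _ ha) (p.smul_mem _ hb))

theorem Finset.card_inter_map_sumComm_add {ι : Type*} [DecidableEq ι] (C : Finset (ι ⊕ ι)) :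
    (C ∩ C.map (Equiv.sumComm ι ι).toEmbedding).card + 2 * (C.image (Sum.elim id id)).card =
      2 * C.card := by
  have hunion : C ∪ C.map (Equiv.sumComm ι ι).toEmbedding =
      (C.image (Sum.elim id id)).disjSum (C.image (Sum.elim id id)) := by
    ext (i | i) <;> simp [or_comm]
  have := Finset.card_union_add_card_inter C (C.map (Equiv.sumComm ι ι).toEmbedding)
  rw [hunion, Finset.card_disjSum, Finset.card_map] at this
  omega

namespace PolarGrass

section Pairing

variable {ι V R : Type*} [Zero R] {B : V → V → R}

open Classical in
def nonOrthPairs [Fintype ι] (B : V → V → R) (v : ι → V) : Finset (ι × ι) :=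
  Finset.univ.filter fun p => B (v p.1) (v p.2) ≠ 0

theorem mem_nonOrthPairs [Fintype ι] {v : ι → V} {p : ι × ι} :
    p ∈ nonOrthPairs B v ↔ B (v p.1) (v p.2) ≠ 0 := by
  simp [nonOrthPairs]

theorem card_nonOrthPairs_add_two_le [Fintype ι] [DecidableEq ι] {v w : ι → V}
    {s t : ι} (hst : s ≠ t) (hv : B (v s) (v t) ≠ 0) (hv' : B (v t) (v s) ≠ 0)
    (hw : B (w s) (w t) = 0) (hw' : B (w t) (w s) = 0)
    (hvw : ∀ a b, B (v a) (v b) = 0 → B (w a) (w b) = 0) :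
    (nonOrthPairs B w).card + 2 ≤ (nonOrthPairs B v).card := by
  have hsub : nonOrthPairs B w ⊆ ((nonOrthPairs B v).erase (s, t)).erase (t, s) := by
    intro p hp
    rw [mem_nonOrthPairs] at hp
    simp only [Finset.mem_erase, mem_nonOrthPairs]
    refine ⟨?_, ?_, fun h0 => hp (hvw _ _ h0)⟩ <;> rintro rfl <;> contradiction
  have hts : (t, s) ∈ (nonOrthPairs B v).erase (s, t) :=
    Finset.mem_erase.mpr ⟨fun he => hst (Prod.ext_iff.mp he).2, mem_nonOrthPairs.mpr hv'⟩
  have hle := Finset.card_le_card hsub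
  have hpos := Finset.card_pos.mpr ⟨_, hts⟩
  rw [Finset.card_erase_of_mem hts] at hle
  rw [Finset.card_erase_of_mem (mem_nonOrthPairs.mpr hv)] at hle hpos
  omega

theorem update_apply_mem {α : Type*} [DecidableEq ι] {S : Set α} {v : ι → α}
    (hv : ∀ t, v t ∈ S) {s : ι} {x : α} (hx : x ∈ S) (t : ι) : update v s x t ∈ S := by
  rcases eq_or_ne t s with rfl | ht
  · simpa using hx
  · simpa [ht] using hv t

end Pairing

variable {F : Type*} [Field F] {V : Type*} [AddCommGroup V] [Module F V]
  {σ : F ≃+* F} {h : V → V → F}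

theorem grassmann_le_exteriorPower (P : Submodule F V → Prop) (k : ℕ) :
    grassmann F V P k ≤ ⋀[F]^k V := by
  refine Submodule.span_le.mpr ?_
  rintro _ ⟨v, -, -, -, rfl⟩
  exact ExteriorAlgebra.ιMulti_range F k (Set.mem_range_self v)

namespace IsHermitianForm

theorem add_left (hh : IsHermitianForm F V σ h) (x y z : V) : h (x + y) z = h x z + h y z :=
  hh.1 x y z

theorem add_right (hh : IsHermitianForm F V σ h) (x y z : V) : h x (y + z) = h x y + h x z :=
  hh.2.1 x y z

theorem smul_left (hh : IsHermitianForm F V σ h) (a : F) (x y : V) :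
    h (a • x) y = σ a * h x y := by
  simpa using hh.2.2.1 a 1 x y

theorem smul_right (hh : IsHermitianForm F V σ h) (a : F) (x y : V) :
    h x (a • y) = a * h x y := by
  simpa using hh.2.2.1 1 a x y

theorem zero_left (hh : IsHermitianForm F V σ h) (y : V) : h 0 y = 0 := by
  simpa using hh.smul_left 0 0 y

theorem zero_right (hh : IsHermitianForm F V σ h) (x : V) : h x 0 = 0 := by
  simpa using hh.smul_right 0 x 0

theorem apply_swap (hh : IsHermitianForm F V σ h) (x y : V) : h y x = σ (h x y) :=
  hh.2.2.2 x y

theorem eq_zero_comm (hh : IsHermitianForm F V σ h) {x y : V} : h x y = 0 ↔ h y x = 0 := by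
  rw [hh.apply_swap x y, map_eq_zero]

theorem totSingB_span (hh : IsHermitianForm F V σ h) {s : Set V}
    (hs : ∀ x ∈ s, ∀ y ∈ s, h x y = 0) : TotSingB F V h (Submodule.span F s) := by
  intro x hx y hy
  induction hx, hy using Submodule.span_induction₂ with
  | mem_mem x y hx hy => exact hs x hx y hy
  | zero_left y _ => exact hh.zero_left y
  | zero_right x _ => exact hh.zero_right x
  | add_left x y z _ _ _ hxz hyz => rw [hh.add_left, hxz, hyz, add_zero]
  | add_right x y z _ _ _ hxy hxz => rw [hh.add_right, hxy, hxz, add_zero]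
  | smul_left a x y _ _ hxy => rw [hh.smul_left, hxy, mul_zero]
  | smul_right a x y _ _ hxy => rw [hh.smul_right, hxy, mul_zero]

theorem ιMulti_mem_grassmann_of_forall_apply_eq_zero (hh : IsHermitianForm F V σ h) {k : ℕ}
    {v : Fin k → V} (hv : ∀ s t, h (v s) (v t) = 0) :
    ExteriorAlgebra.ιMulti F k v ∈ grassmann F V (TotSingB F V h) k := by
  by_cases hind : LinearIndependent F v
  · refine Submodule.subset_span ⟨v, fun _ => trivial, hind, hh.totSingB_span ?_, rfl⟩
    rintro _ ⟨s, rfl⟩ _ ⟨t, rfl⟩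
    exact hv s t
  · rw [(ExteriorAlgebra.ιMulti F k).map_linearDependent v hind]
    exact zero_mem _

section Shift

variable {ι : Type*} [DecidableEq ι] {v : ι → V} {s₀ s₁ : ι} {x y : V}

theorem card_nonOrthPairs_update_add_two_le [Fintype ι] (hh : IsHermitianForm F V σ h)
    (hs : s₀ ≠ s₁) (hv : h (v s₀) (v s₁) ≠ 0) (hxx : h x x = 0) (hx : ∀ t, h x (v t) = 0) :
    (nonOrthPairs h (update v s₁ x)).card + 2 ≤ (nonOrthPairs h v).card := by
  have hx' t : h (v t) x = 0 := hh.eq_zero_comm.mp (hx t)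
  refine card_nonOrthPairs_add_two_le hs hv (fun h0 => hv (hh.eq_zero_comm.mp h0)) ?_ ?_ ?_
  · simp [hs, hx']
  · simp [hs, hx]
  · intro a b hab
    simp only [update_apply]
    split_ifs <;> simp [*]

theorem apply_shift (hh : IsHermitianForm F V σ h) (hs : s₀ ≠ s₁)
    (hxx : h x x = 0) (hyy : h y y = 0) (hx : ∀ t, h x (v t) = 0) (hy : ∀ t, h y (v t) = 0)
    {a b : ι} (hab : (a, b) ≠ (s₀, s₁)) (hba : (a, b) ≠ (s₁, s₀)) :
    h (update (update v s₀ (v s₀ + x)) s₁ (v s₁ + y) a)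
      (update (update v s₀ (v s₀ + x)) s₁ (v s₁ + y) b) = h (v a) (v b) := by
  have hx' t : h (v t) x = 0 := hh.eq_zero_comm.mp (hx t)
  have hy' t : h (v t) y = 0 := hh.eq_zero_comm.mp (hy t)
  simp only [update_apply]
  split_ifs <;> subst_vars <;> simp_all [hh.add_left, hh.add_right]

theorem apply_shift_self (hh : IsHermitianForm F V σ h) (hs : s₀ ≠ s₁)
    (hv : ∀ t, h (v t) (v t) = 0) (hxx : h x x = 0) (hyy : h y y = 0)
    (hx : ∀ t, h x (v t) = 0) (hy : ∀ t, h y (v t) = 0) (t : ι) :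
    h (update (update v s₀ (v s₀ + x)) s₁ (v s₁ + y) t)
      (update (update v s₀ (v s₀ + x)) s₁ (v s₁ + y) t) = 0 := by
  rw [hh.apply_shift hs hxx hyy hx hy, hv] <;> rintro ⟨rfl, rfl⟩ <;> simp at hs

theorem card_nonOrthPairs_shift_add_two_le [Fintype ι] (hh : IsHermitianForm F V σ h)
    (hs : s₀ ≠ s₁) (hv : h (v s₀) (v s₁) ≠ 0)
    (hxx : h x x = 0) (hyy : h y y = 0) (hx : ∀ t, h x (v t) = 0) (hy : ∀ t, h y (v t) = 0)
    (hxy : h (v s₀) (v s₁) + h x y = 0) :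
    (nonOrthPairs h (update (update v s₀ (v s₀ + x)) s₁ (v s₁ + y))).card + 2 ≤
      (nonOrthPairs h v).card := by
  have hy' t : h (v t) y = 0 := hh.eq_zero_comm.mp (hy t)
  have h01 : h (update (update v s₀ (v s₀ + x)) s₁ (v s₁ + y) s₀)
      (update (update v s₀ (v s₀ + x)) s₁ (v s₁ + y) s₁) = 0 := by
    simp [hs, hh.add_left, hh.add_right, hx, hy', hxy]
  refine card_nonOrthPairs_add_two_le hs hv (fun h0 => hv (hh.eq_zero_comm.mp h0)) h01
    (hh.eq_zero_comm.mp h01) fun a b hab => ?_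
  by_cases h1 : (a, b) = (s₀, s₁)
  · simp_all
  by_cases h2 : (a, b) = (s₁, s₀)
  · obtain ⟨rfl, rfl⟩ := Prod.ext_iff.mp h2
    exact hh.eq_zero_comm.mp h01
  rwa [hh.apply_shift hs hxx hyy hx hy h1 h2]

end Shift

end IsHermitianForm

/-- In the expansion of the shift with parameter `a`, the wedge with `s₀ ↦ y, s₁ ↦ x` has
coefficient `-γ a σ(a)⁻¹`, which differs at `a = 1` and `a = τ`. -/
theorem apply_mem_of_hyperbolic_shifts {ι N : Type*} [DecidableEq ι] [AddCommGroup N]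
    [Module F N] (f : V [⋀^ι]→ₗ[F] N) {G : Submodule F N} {τ : F} (hτ : σ τ ≠ τ)
    {v : ι → V} {s₀ s₁ : ι} (hs : s₀ ≠ s₁) {γ : F} (hγ : γ ≠ 0) {x y : V}
    (hx : f (update v s₁ x) ∈ G) (hy : f (update v s₀ y) ∈ G)
    (hshift : ∀ a : F, a ≠ 0 →
      f (update (update v s₀ (v s₀ + a • y)) s₁ (v s₁ + (-(σ a)⁻¹ * γ) • x)) ∈ G) :
    f v ∈ G := by
  have hZ (a : F) (ha : a ≠ 0) :
      f v + (a * (-(σ a)⁻¹ * γ)) • f (update (update v s₀ y) s₁ x) ∈ G := by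
    have hmem := G.sub_mem (G.sub_mem (hshift a ha) (G.smul_mem a hy))
      (G.smul_mem (-(σ a)⁻¹ * γ) hx)
    rw [f.map_update_add_smul_update_add_smul v hs] at hmem
    convert hmem using 1
    abel
  have hτ0 : τ ≠ 0 := by
    rintro rfl
    exact hτ (map_zero σ)
  refine Submodule.mem_of_add_smul_mem_of_add_smul_mem ?_ (hZ 1 one_ne_zero) (hZ τ hτ0)
  intro heq
  have hστ : σ τ ≠ 0 := (map_ne_zero σ).mpr hτ0
  rw [map_one] at heq
  field_simp at heq
  exact hτ (by simpa using heq)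

structure IsHyperbolicFamily {ι : Type*} (h : V → V → F) (e f : ι → V) : Prop where
  apply_e_e : ∀ i j, h (e i) (e j) = 0
  apply_f_f : ∀ i j, h (f i) (f j) = 0
  apply_e_f_self : ∀ i, h (e i) (f i) = 1
  apply_e_f_of_ne : ∀ i j, i ≠ j → h (e i) (f j) = 0

section HyperbolicFamily

variable {ι : Type*} {e f : ι → V}

def orthPlanes (hh : IsHermitianForm F V σ h) (e f : ι → V) (T : Finset ι) :
    Submodule F V where
  carrier := {x | ∀ i ∈ T, h (e i) x = 0 ∧ h (f i) x = 0}
  add_mem' hx hy i hi := by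
    simp only [hh.add_right, (hx i hi).1, (hx i hi).2, (hy i hi).1, (hy i hi).2, add_zero,
      and_self]
  zero_mem' _ _ := ⟨hh.zero_right _, hh.zero_right _⟩
  smul_mem' a _ hx i hi := by
    simp only [hh.smul_right, (hx i hi).1, (hx i hi).2, mul_zero, and_self]

theorem orthPlanes_anti (hh : IsHermitianForm F V σ h) {T T' : Finset ι} (hT : T' ⊆ T) :
    orthPlanes hh e f T ≤ orthPlanes hh e f T' :=
  fun _ hx i hi => hx i (hT hi)

namespace IsHyperbolicFamily

theorem apply_f_e_self (hh : IsHermitianForm F V σ h) (hef : IsHyperbolicFamily h e f)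
    (i : ι) : h (f i) (e i) = 1 := by
  rw [hh.apply_swap, hef.apply_e_f_self, map_one]

theorem apply_sumElim_eq_zero (hh : IsHermitianForm F V σ h) (hef : IsHyperbolicFamily h e f)
    {x y : ι ⊕ ι} (hxy : y ≠ x.swap) : h (Sum.elim e f x) (Sum.elim e f y) = 0 := by
  rcases x with i | i <;> rcases y with j | j
  · exact hef.apply_e_e i j
  · exact hef.apply_e_f_of_ne i j fun hij => hxy (by simp [hij])
  · exact hh.eq_zero_comm.mp (hef.apply_e_f_of_ne j i fun hji => hxy (by simp [hji]))
  · exact hef.apply_f_f i j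

theorem e_mem_orthPlanes (hh : IsHermitianForm F V σ h) (hef : IsHyperbolicFamily h e f)
    {T : Finset ι} {j : ι} (hj : j ∉ T) : e j ∈ orthPlanes hh e f T := fun i hi =>
  ⟨hef.apply_e_e i j,
    hh.eq_zero_comm.mp (hef.apply_e_f_of_ne j i fun hji => hj (hji ▸ hi))⟩

theorem f_mem_orthPlanes (hh : IsHermitianForm F V σ h) (hef : IsHyperbolicFamily h e f)
    {T : Finset ι} {j : ι} (hj : j ∉ T) : f j ∈ orthPlanes hh e f T := fun i hi =>
  ⟨hef.apply_e_f_of_ne i j fun hij => hj (hij ▸ hi), hef.apply_f_f i j⟩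

theorem sumElim_mem_orthPlanes (hh : IsHermitianForm F V σ h) (hef : IsHyperbolicFamily h e f)
    {T : Finset ι} {x : ι ⊕ ι} (hx : Sum.elim id id x ∉ T) :
    Sum.elim e f x ∈ orthPlanes hh e f T := by
  rcases x with i | i
  · exact hef.e_mem_orthPlanes hh hx
  · exact hef.f_mem_orthPlanes hh hx

theorem ιMulti_mem_grassmann_of_fewer_nonOrthPairs [DecidableEq ι]
    (hh : IsHermitianForm F V σ h) {τ : F} (hτ : σ τ ≠ τ) (hef : IsHyperbolicFamily h e f)
    {k : ℕ} {T : Finset ι} {j : ι} (hj : j ∈ T)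
    {v : Fin k → V} (hv : ∀ t, h (v t) (v t) = 0) (hvT : ∀ t, v t ∈ orthPlanes hh e f T)
    {s₀ s₁ : Fin k} (h01 : h (v s₀) (v s₁) ≠ 0)
    (IH : ∀ w : Fin k → V, (∀ t, h (w t) (w t) = 0) →
      (∀ t, w t ∈ orthPlanes hh e f (T.erase j)) →
      (nonOrthPairs h w).card + 2 ≤ (nonOrthPairs h v).card →
      ExteriorAlgebra.ιMulti F k w ∈ grassmann F V (TotSingB F V h) k) :
    ExteriorAlgebra.ιMulti F k v ∈ grassmann F V (TotSingB F V h) k := by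
  have hs : s₀ ≠ s₁ := by
    rintro rfl
    exact h01 (hv s₀)
  have hvT' t : v t ∈ orthPlanes hh e f (T.erase j) :=
    orthPlanes_anti hh (Finset.erase_subset j T) (hvT t)
  have hej := hef.e_mem_orthPlanes hh (Finset.notMem_erase j T)
  have hfj := hef.f_mem_orthPlanes hh (Finset.notMem_erase j T)
  have he t : h (e j) (v t) = 0 := (hvT t j hj).1
  have hf t : h (f j) (v t) = 0 := (hvT t j hj).2
  refine apply_mem_of_hyperbolic_shifts _ hτ hs h01 (x := e j) (y := f j) ?_ ?_ ?_
  · exact IH _ (update_apply_mem (S := {z | h z z = 0}) hv (hef.apply_e_e j j))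
      (update_apply_mem hvT' hej)
      (hh.card_nonOrthPairs_update_add_two_le hs h01 (hef.apply_e_e j j) he)
  · have h10 : h (v s₁) (v s₀) ≠ 0 := fun h0 => h01 (hh.eq_zero_comm.mp h0)
    exact IH _ (update_apply_mem (S := {z | h z z = 0}) hv (hef.apply_f_f j j))
      (update_apply_mem hvT' hfj)
      (hh.card_nonOrthPairs_update_add_two_le hs.symm h10 (hef.apply_f_f j j) hf)
  · intro a ha
    set b := -(σ a)⁻¹ * h (v s₀) (v s₁)
    have hxx : h (a • f j) (a • f j) = 0 := by simp [hh.smul_left, hh.smul_right, hef.apply_f_f]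
    have hyy : h (b • e j) (b • e j) = 0 := by simp [hh.smul_left, hh.smul_right, hef.apply_e_e]
    have hx t : h (a • f j) (v t) = 0 := by simp [hh.smul_left, hf]
    have hy t : h (b • e j) (v t) = 0 := by simp [hh.smul_left, he]
    have hxy : h (v s₀) (v s₁) + h (a • f j) (b • e j) = 0 := by
      rw [hh.smul_left, hh.smul_right, hef.apply_f_e_self hh, mul_one, ← mul_assoc, mul_neg,
        mul_inv_cancel₀ ((map_ne_zero σ).mpr ha)]
      ring
    refine IH _ (hh.apply_shift_self hs hv hxx hyy hx hy) ?_
      (hh.card_nonOrthPairs_shift_add_two_le hs h01 hxx hyy hx hy hxy)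
    exact update_apply_mem (update_apply_mem hvT' (add_mem (hvT' s₀) (Submodule.smul_mem _ a hfj)))
      (add_mem (hvT' s₁) (Submodule.smul_mem _ b hej))

/-- `nonOrthPairs` counts ordered pairs, so each plane of `T` pays for one unordered pair. -/
theorem ιMulti_mem_grassmann_of_card_nonOrthPairs_le (hh : IsHermitianForm F V σ h) {τ : F}
    (hτ : σ τ ≠ τ) (hef : IsHyperbolicFamily h e f) {k : ℕ} {T : Finset ι} {v : Fin k → V}
    (hv : ∀ t, h (v t) (v t) = 0) (hvT : ∀ t, v t ∈ orthPlanes hh e f T)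
    (hcard : (nonOrthPairs h v).card ≤ 2 * T.card) :
    ExteriorAlgebra.ιMulti F k v ∈ grassmann F V (TotSingB F V h) k := by
  classical
  induction hN : (nonOrthPairs h v).card using Nat.strong_induction_on generalizing T v with
  | _ N ih =>
  obtain hempty | ⟨⟨s₀, s₁⟩, h01⟩ := (nonOrthPairs h v).eq_empty_or_nonempty
  · refine hh.ιMulti_mem_grassmann_of_forall_apply_eq_zero fun s t => ?_
    by_contra hst
    simpa [hempty] using (mem_nonOrthPairs (B := h) (v := v) (p := (s, t))).mpr hst
  have hpos := Finset.card_pos.mpr ⟨_, h01⟩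
  obtain ⟨j, hj⟩ : T.Nonempty := Finset.card_pos.mp (by omega)
  refine hef.ιMulti_mem_grassmann_of_fewer_nonOrthPairs hh hτ hj hv hvT (mem_nonOrthPairs.mp h01)
    fun w hw hwT hlt => ih _ (by omega) hw hwT ?_ rfl
  rw [Finset.card_erase_of_mem hj]
  omega

theorem card_nonOrthPairs_comp_add_le [DecidableEq ι] (hh : IsHermitianForm F V σ h)
    (hef : IsHyperbolicFamily h e f) {k : ℕ} {c : Fin k → ι ⊕ ι} (hc : Injective c) :
    (nonOrthPairs h (Sum.elim e f ∘ c)).card +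
      2 * (Finset.univ.image (Sum.elim id id ∘ c)).card ≤ 2 * k := by
  have hpartner {s t : Fin k} (hst : (s, t) ∈ nonOrthPairs h (Sum.elim e f ∘ c)) :
      c t = (c s).swap := by
    by_contra hne
    exact mem_nonOrthPairs.mp hst (hef.apply_sumElim_eq_zero hh hne)
  set C := Finset.univ.image c
  have hle : (nonOrthPairs h (Sum.elim e f ∘ c)).card ≤
      (C ∩ C.map (Equiv.sumComm ι ι).toEmbedding).card := by
    refine Finset.card_le_card_of_injOn (fun p => c p.1) (fun p hp => ?_)
      fun p hp q hq hpq => ?_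
    · simp only [Finset.coe_inter, Finset.coe_map, Set.mem_inter_iff, Finset.mem_coe, C,
        Finset.mem_image, Finset.mem_univ, true_and, Set.mem_image]
      exact ⟨⟨p.1, rfl⟩, c p.2, ⟨p.2, rfl⟩, by simp [hpartner hp]⟩
    · have h2 : p.2 = q.2 := hc (by rw [hpartner hp, hpartner hq]; exact congrArg Sum.swap hpq)
      exact Prod.ext (hc hpq) h2
  have hcount := C.card_inter_map_sumComm_add
  rw [Finset.image_image, Finset.card_image_of_injective _ hc, Finset.card_univ,
    Fintype.card_fin] at hcount
  omega

theorem ιMulti_comp_mem_grassmann [Fintype ι] [DecidableEq ι] (hh : IsHermitianForm F V σ h)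
    {τ : F} (hτ : σ τ ≠ τ) (hef : IsHyperbolicFamily h e f) {k : ℕ}
    (hk : k ≤ Fintype.card ι) (c : Fin k → ι ⊕ ι) :
    ExteriorAlgebra.ιMulti F k (Sum.elim e f ∘ c) ∈ grassmann F V (TotSingB F V h) k := by
  by_cases hc : Injective c
  swap
  · rw [AlternatingMap.map_eq_zero_of_not_injective _ _ fun hinj => hc hinj.of_comp]
    exact zero_mem _
  set I := Finset.univ.image (Sum.elim id id ∘ c)
  refine hef.ιMulti_mem_grassmann_of_card_nonOrthPairs_le hh hτ (T := Iᶜ) (fun t => ?_)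
    (fun t => ?_) ?_
  · exact hef.apply_sumElim_eq_zero hh (by rcases c t <;> simp)
  · exact hef.sumElim_mem_orthPlanes hh (by simp [I])
  · have hcount : _ + 2 * I.card ≤ 2 * k := hef.card_nonOrthPairs_comp_add_le hh hc
    rw [Finset.card_compl]
    have := I.card_le_univ
    omega

end IsHyperbolicFamily

end HyperbolicFamily

theorem exists_isHyperbolicFamily_of_hasWittDecomp [FiniteDimensional F V] {RadSet : Set V}
    {n : ℕ} (hdec : HasWittDecomp F V h (fun v => h v v = 0) RadSet n 0 0) :
    ∃ e f : Fin n → V, IsHyperbolicFamily h e f ∧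
      Submodule.span F (Set.range (Sum.elim e f)) = ⊤ := by
  obtain ⟨W, W₀, R, hint, horth, hplanes, -, hW₀, -, hR⟩ := hdec
  choose e f hW he hf hef using hplanes
  have he_mem i : e i ∈ W i := hW i ▸ Submodule.subset_span (Set.mem_insert _ _)
  have hf_mem i : f i ∈ W i := hW i ▸ Submodule.subset_span (Set.mem_insert_of_mem _ rfl)
  have hWW {i j : Fin n} (hij : i ≠ j) {x y : V} (hx : x ∈ W i) (hy : y ∈ W j) : h x y = 0 :=
    horth (.inl i) (.inl j) (by simpa using hij) x hx y hy
  refine ⟨e, f, ⟨fun i j => ?_, fun i j => ?_, hef, fun i j hij => hWW hij (he_mem i) (hf_mem j)⟩,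
    ?_⟩
  · rcases eq_or_ne i j with rfl | hij
    exacts [he i, hWW hij (he_mem i) (he_mem j)]
  · rcases eq_or_ne i j with rfl | hij
    exacts [hf i, hWW hij (hf_mem i) (hf_mem j)]
  rw [eq_top_iff, ← hint.submodule_iSup_eq_top, iSup_le_iff]
  rintro (i | x)
  · rw [Sum.elim_inl, hW i, Submodule.span_le]
    rintro _ (rfl | rfl)
    exacts [Submodule.subset_span ⟨.inl i, rfl⟩, Submodule.subset_span ⟨.inr i, rfl⟩]
  · fin_cases x
    · simp [Submodule.finrank_eq_zero.mp hW₀]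
    · simp [Submodule.finrank_eq_zero.mp hR]

end PolarGrass

open PolarGrass Module in
theorem stmt12_general (F : Type*) [Field F] (V : Type*) [AddCommGroup V] [Module F V]
    [FiniteDimensional F V]
    (σ : F ≃+* F) (hσne : σ ≠ RingEquiv.refl F)
    (h : V → V → F) (hherm : IsHermitianForm F V σ h)
    (n : ℕ)
    (hdec : HasWittDecomp F V h (fun v => h v v = 0) (radSetB F V h) n 0 0) :
    ∀ k : ℕ, 1 ≤ k → k ≤ n →
      grassmann F V (TotSingB F V h) k = ⋀[F]^k V := by
  obtain ⟨τ, hτ⟩ : ∃ τ, σ τ ≠ τ := not_forall.mp fun H => hσne (RingEquiv.ext H)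
  obtain ⟨e, f, hef, hspan⟩ := exists_isHyperbolicFamily_of_hasWittDecomp hdec
  intro k _ hk
  refine le_antisymm (grassmann_le_exteriorPower _ k) ?_
  rw [← exteriorPower.ιMulti_span_fixedDegree_of_span_eq_top F k V hspan, Submodule.span_le]
  rintro _ ⟨v, hv, rfl⟩
  choose c hc using fun t => hv ⟨t, rfl⟩
  obtain rfl : Sum.elim e f ∘ c = v := funext hc
  exact hef.ιMulti_comp_mem_grassmann hherm hτ (by simpa using hk) c

open PolarGrass Module in
/-- a non-degenerate σ-Hermitian form with `N = 2n`, Witt index `n ≥ 2`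
(anisotropic defect 0): `V` is the orthogonal sum of `n` hyperbolic planes. For
`1 ≤ k ≤ n` the Grassmann image is all of `⋀^k V`. -/
theorem stmt12 (F : Type*) [Field F] (V : Type*) [AddCommGroup V] [Module F V]
    [FiniteDimensional F V]
    (σ : F ≃+* F) (hσinv : ∀ a, σ (σ a) = a) (hσne : σ ≠ RingEquiv.refl F)
    (h : V → V → F) (hherm : IsHermitianForm F V σ h)
    (hndeg : ∀ v : V, (∀ w : V, h v w = 0) → v = 0)
    (n : ℕ) (hn : 2 ≤ n)
    (hdec : HasWittDecomp F V h (fun v => h v v = 0) (radSetB F V h) n 0 0)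
    (hNV : Module.finrank F V = 2 * n) :
    ∀ k : ℕ, 1 ≤ k → k ≤ n →
      grassmann F V (TotSingB F V h) k = ⋀[F]^k V :=
  stmt12_general F V σ hσne h hherm n hdec
end
end

section
/- Suppose char(F) = 2 and q is non-degenerate with N = 2n and Witt index n ≥ 2 (anisotropic defect 0), i.e., V is an f_q-orthogonal direct sum of n hyperbolic planes for q. Then for every integer k with 1 ≤ k ≤ n, the Grassmann image G_k(q) coincides with the symplectic Grassmann image S_k(f_q). -/
/-!
Totally singular subspaces are totally isotropic for `f_q`, which gives `G_k(q) ≤ S_k(f_q)`.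
Conversely, let `v₁, …, v_k` span an `f_q`-totally isotropic subspace; induct on the number of
non-singular `vᵢ`. If `q vᵢ ≠ 0`, choose a singular `u` with `f_q(u, vᵢ) = 1` and
`f_q(u, vⱼ) = 0` for `j ≠ i`; then `a = q(vᵢ) u` and `b = vᵢ - a` are singular and orthogonal to
the other `vⱼ`, and multilinearity writes `v₁ ∧ ⋯ ∧ v_k` as the sum of two wedges with fewer
non-singular vectors.

Such a `u` exists in every hyperbolic space, i.e. a nondegenerate space containing a totally
singular subspace equal to its own orthogonal. For `k = 1` this is a direct construction;
otherwise take a nonzero `w = vⱼ`, a singular `p` with `f_q(p, w) = 1`, and pass to `{p, w}^⊥`: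
it is again hyperbolic (after moving the Lagrangian to contain `p`), and it contains the vectors
`v - f_q(p, v) w`, which pair with `{p, w}^⊥` exactly as the `v` do. Characteristic 2 enters
through `f_q(x, x) = 2 q(x) = 0`.
-/

noncomputable section

namespace PolarGrass

open QuadraticMap Submodule

variable {F V : Type*} [Field F] [AddCommGroup V] [Module F V] (q : QuadraticForm F V)

def IsTotallyIsotropic (S : Set V) : Prop :=
  ∀ x ∈ S, ∀ y ∈ S, polar q x y = 0

def IsLagrangian (U L : Submodule F V) : Prop :=
  L ≤ U ∧ TotSingQ F V q L ∧ ∀ x ∈ U, (∀ y ∈ L, polar q x y = 0) → x ∈ L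

structure IsHyperbolic (U : Submodule F V) : Prop where
  nondegenerate : ∀ x ∈ U, q x = 0 → (∀ y ∈ U, polar q x y = 0) → x = 0
  exists_isLagrangian : ∃ L, IsLagrangian q U L

variable {q}

@[simp]
theorem mem_ker_polarBilin {p x : V} : x ∈ LinearMap.ker (polarBilin q p) ↔ polar q p x = 0 :=
  Iff.rfl

theorem polar_eq_zero_of_map_eq_zero {x y : V} (hx : q x = 0) (hy : q y = 0)
    (hxy : q (x + y) = 0) : polar q x y = 0 := by
  simp [polar, hx, hy, hxy]

theorem polar_self_eq_zero_of_map_eq_zero {x : V} (hx : q x = 0) : polar q x x = 0 := by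
  simp [hx]

theorem IsTotallyIsotropic.mono {S T : Set V} (hT : IsTotallyIsotropic q T) (hST : S ⊆ T) :
    IsTotallyIsotropic q S :=
  fun x hx y hy => hT x (hST hx) y (hST hy)

theorem IsTotallyIsotropic.span {S : Set V} (hS : IsTotallyIsotropic q S) :
    IsTotallyIsotropic q (Submodule.span F S) := by
  have hleft : ∀ x ∈ S, Submodule.span F S ≤ LinearMap.ker (polarBilin q x) :=
    fun x hx => span_le.2 fun y hy => hS x hx y hy
  intro x hx y hy
  have hright : Submodule.span F S ≤ LinearMap.ker ((polarBilin q).flip y) :=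
    span_le.2 fun x' hx' => hleft x' hx' hy
  exact hright hx

theorem map_eq_zero_of_mem_span {S : Set V} (hS : IsTotallyIsotropic q S) (hq : ∀ x ∈ S, q x = 0)
    {x : V} (hx : x ∈ span F S) : q x = 0 := by
  induction hx using span_induction with
  | mem x h => exact hq x h
  | zero => simp
  | add x y hx hy ihx ihy =>
    rw [QuadraticMap.map_add q, ihx, ihy, hS.span x hx y hy, add_zero, add_zero]
  | smul a x _ ih => rw [QuadraticMap.map_smul, ih, smul_zero]

theorem totSingQ_span_range {ι : Type*} {v : ι → V} (hv : ∀ i j, polar q (v i) (v j) = 0)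
    (hq : ∀ i, q (v i) = 0) : TotSingQ F V q (span F (Set.range v)) := by
  refine fun x hx => map_eq_zero_of_mem_span ?_ (by rintro _ ⟨i, rfl⟩; exact hq i) hx
  rintro _ ⟨i, rfl⟩ _ ⟨j, rfl⟩
  exact hv i j

theorem map_sub_smul_eq_zero {u x : V} (hu : q u = 0) (hux : polar q u x = 1) :
    q (x - q x • u) = 0 := by
  have h := QuadraticMap.map_add q (x - q x • u) (q x • u)
  simp only [sub_add_cancel, QuadraticMap.map_smul, hu, add_zero, polar_sub_left,
    polar_smul_left, polar_smul_right, polar_self_eq_zero_of_map_eq_zero hu, polar_comm q x u,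
    hux, smul_eq_mul, mul_zero, mul_one, sub_zero] at h
  linear_combination -h

theorem IsLagrangian.polar_eq_zero {U L : Submodule F V} (hL : IsLagrangian q U L) {x y : V}
    (hx : x ∈ L) (hy : y ∈ L) : polar q x y = 0 :=
  polar_eq_zero_of_map_eq_zero (hL.2.1 x hx) (hL.2.1 y hy) (hL.2.1 _ (add_mem hx hy))

theorem IsLagrangian.exists_mem {U L : Submodule F V} (hL : IsLagrangian q U L) {p : V}
    (hpU : p ∈ U) (hp : q p = 0) : ∃ L', IsLagrangian q U L' ∧ p ∈ L' := by
  obtain ⟨hLU, hLq, hLperp⟩ := hL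
  have hpp : polar q p p = 0 := polar_self_eq_zero_of_map_eq_zero hp
  refine ⟨L ⊓ LinearMap.ker (polarBilin q p) ⊔ span F {p}, ⟨?_, ?_, ?_⟩,
    mem_sup_right (mem_span_singleton_self p)⟩
  · exact sup_le (inf_le_left.trans hLU) ((span_singleton_le_iff_mem _ _).2 hpU)
  · intro x hx
    obtain ⟨l, hl, _, hm, rfl⟩ := mem_sup.1 hx
    obtain ⟨t, rfl⟩ := mem_span_singleton.1 hm
    rw [mem_inf, mem_ker_polarBilin] at hl
    rw [QuadraticMap.map_add q, QuadraticMap.map_smul, hp, hLq l hl.1, polar_smul_right,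
      polar_comm, hl.2]
    simp
  · intro x hxU hx
    have hxp : polar q x p = 0 := hx p (mem_sup_right (mem_span_singleton_self p))
    have hxl : ∀ l ∈ L, polar q p l = 0 → polar q x l = 0 :=
      fun l hl hpl => hx l (mem_sup_left ⟨hl, hpl⟩)
    by_cases hpL : ∀ l ∈ L, polar q p l = 0
    · refine mem_sup_left (mem_inf.2 ⟨hLperp x hxU fun l hl => hxl l hl (hpL l hl), ?_⟩)
      rwa [mem_ker_polarBilin, polar_comm]
    push Not at hpL
    obtain ⟨l₀, hl₀L, hl₀⟩ := hpL
    obtain ⟨t, ht⟩ : ∃ t, t * polar q p l₀ = polar q x l₀ := ⟨_, div_mul_cancel₀ _ hl₀⟩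
    have hx'L : x - t • p ∈ L := by
      refine hLperp _ (sub_mem hxU (smul_mem _ _ hpU)) fun l hl => ?_
      have h := hxl (l - (polar q p l / polar q p l₀) • l₀) (sub_mem hl (smul_mem _ _ hl₀L))
        (by rw [polar_sub_right, polar_smul_right, smul_eq_mul, div_mul_cancel₀ _ hl₀, sub_self])
      rw [polar_sub_right, polar_smul_right, smul_eq_mul, sub_eq_zero] at h
      rw [polar_sub_left, polar_smul_left, smul_eq_mul, h, ← ht]
      field_simp
      ring
    have hx'p : polar q p (x - t • p) = 0 := by
      rw [polar_sub_right, polar_smul_right, hpp, polar_comm, hxp, smul_zero, sub_zero]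
    rw [← sub_add_cancel x (t • p)]
    exact add_mem (mem_sup_left (mem_inf.2 ⟨hx'L, hx'p⟩))
      (mem_sup_right (smul_mem _ _ (mem_span_singleton_self p)))

theorem IsLagrangian.inf_ker {U L : Submodule F V} (hL : IsLagrangian q U L) {p p' : V}
    (hpL : p ∈ L) (hpp' : polar q p p' = 1) :
    IsLagrangian q (U ⊓ LinearMap.ker (polarBilin q p) ⊓ LinearMap.ker (polarBilin q p'))
      (L ⊓ LinearMap.ker (polarBilin q p')) := by
  refine ⟨fun x hx => ?_, fun x hx => hL.2.1 x (mem_inf.1 hx).1, fun x hx hxL' => ?_⟩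
  · obtain ⟨hxL, hxp'⟩ := mem_inf.1 hx
    exact mem_inf.2 ⟨mem_inf.2 ⟨hL.1 hxL, hL.polar_eq_zero hpL hxL⟩, hxp'⟩
  · simp only [mem_inf, mem_ker_polarBilin] at hx
    obtain ⟨⟨hxU, hxp⟩, hxp'⟩ := hx
    refine mem_inf.2 ⟨hL.2.2 x hxU fun l hl => ?_, hxp'⟩
    have h := hxL' (l - polar q p' l • p) <| mem_inf.2 ⟨sub_mem hl (smul_mem _ _ hpL), by
      rw [mem_ker_polarBilin, polar_sub_right, polar_smul_right, polar_comm q p' p, hpp',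
        smul_eq_mul, mul_one, sub_self]⟩
    rwa [polar_sub_right, polar_smul_right, polar_comm q x p, hxp, smul_zero, sub_zero] at h

theorem IsHyperbolic.inf_ker [CharP F 2] {U : Submodule F V} (hU : IsHyperbolic q U) {p p' : V}
    (hpU : p ∈ U) (hp'U : p' ∈ U) (hp : q p = 0) (hpp' : polar q p p' = 1) :
    IsHyperbolic q (U ⊓ LinearMap.ker (polarBilin q p) ⊓ LinearMap.ker (polarBilin q p')) := by
  refine ⟨fun x hx hqx hxU' => ?_, ?_⟩
  · simp only [mem_inf, mem_ker_polarBilin] at hx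
    obtain ⟨⟨hxU, hxp⟩, hxp'⟩ := hx
    refine hU.nondegenerate x hxU hqx fun y hy => ?_
    -- `y` minus its component in the hyperbolic plane spanned by `p` and `p'`
    have hy' : y - polar q p' y • p - polar q p y • p' ∈
        U ⊓ LinearMap.ker (polarBilin q p) ⊓ LinearMap.ker (polarBilin q p') := by
      refine mem_inf.2 ⟨mem_inf.2 ⟨sub_mem (sub_mem hy (smul_mem _ _ hpU)) (smul_mem _ _ hp'U),
        ?_⟩, ?_⟩ <;>
      simp [polar_sub_right, polar_smul_right, polar_self_eq_zero_of_map_eq_zero hp,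
        polar_comm q p' p, hpp', CharTwo.two_eq_zero]
    have h := hxU' _ hy'
    rwa [polar_sub_right, polar_sub_right, polar_smul_right, polar_smul_right,
      polar_comm q x p, polar_comm q x p', hxp, hxp', smul_zero, smul_zero, sub_zero,
      sub_zero] at h
  · obtain ⟨L, hL⟩ := hU.exists_isLagrangian
    obtain ⟨L', hL', hpL'⟩ := hL.exists_mem hpU hp
    exact ⟨_, hL'.inf_ker hpL' hpp'⟩

theorem IsHyperbolic.exists_map_eq_zero_polar_eq_one [CharP F 2] {U : Submodule F V}
    (hU : IsHyperbolic q U) {v : V} (hvU : v ∈ U) (hv : v ≠ 0) :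
    ∃ u ∈ U, q u = 0 ∧ polar q u v = 1 := by
  suffices ∃ u ∈ U, q u = 0 ∧ polar q u v ≠ 0 by
    obtain ⟨u, huU, hu, huv⟩ := this
    refine ⟨(polar q u v)⁻¹ • u, smul_mem _ _ huU, ?_, ?_⟩
    · rw [QuadraticMap.map_smul, hu, smul_zero]
    · rw [polar_smul_left, smul_eq_mul, inv_mul_cancel₀ huv]
  obtain ⟨L, hLU, hLq, hLperp⟩ := hU.exists_isLagrangian
  by_cases h : ∃ l ∈ L, polar q l v ≠ 0
  · obtain ⟨l, hl, hlv⟩ := h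
    exact ⟨l, hLU hl, hLq l hl, hlv⟩
  push Not at h
  have hvL : v ∈ L := hLperp v hvU fun l hl => by rw [polar_comm]; exact h l hl
  obtain ⟨x, hxU, hxv⟩ : ∃ x ∈ U, polar q x v ≠ 0 := by
    by_contra! H
    exact hv (hU.nondegenerate v hvU (hLq v hvL) fun y hy => by rw [polar_comm]; exact H y hy)
  -- the correction by a multiple of `v` kills `q x` since `q v = 0` and `char F = 2`
  refine ⟨x + (q x / polar q x v) • v, add_mem hxU (smul_mem _ _ hvU), ?_, ?_⟩
  · rw [QuadraticMap.map_add q, QuadraticMap.map_smul, hLq v hvL, smul_zero, add_zero,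
      polar_smul_right, smul_eq_mul, div_mul_cancel₀ _ hxv, CharTwo.add_self_eq_zero]
  · rwa [polar_add_left, polar_smul_left, polar_self_eq_zero_of_map_eq_zero (hLq v hvL),
      smul_zero, add_zero]

theorem sub_polar_smul_mem_inf_ker {U : Submodule F V} {p w x : V} (hwU : w ∈ U) (hxU : x ∈ U)
    (hpw : polar q p w = 1) (hww : polar q w w = 0) (hwx : polar q w x = 0) :
    x - polar q p x • w ∈ U ⊓ LinearMap.ker (polarBilin q p) ⊓ LinearMap.ker (polarBilin q w) := by
  simpa [polar_sub_right, polar_smul_right, hpw, hww, hwx] using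
    sub_mem hxU (smul_mem _ (polar q p x) hwU)

theorem IsHyperbolic.exists_map_eq_zero_polar_eq_one_of_notMem_span [CharP F 2]
    {S : Submodule F V} (hS : IsTotallyIsotropic q S) {s : Set V} (hs : s.Finite) (hsS : s ⊆ S)
    {U : Submodule F V} (hU : IsHyperbolic q U) (hsU : s ⊆ U) {v : V} (hvS : v ∈ S)
    (hvU : v ∈ U) (hv : v ∉ span F s) :
    ∃ u ∈ U, q u = 0 ∧ polar q u v = 1 ∧ ∀ w ∈ s, polar q u w = 0 := by
  induction hm : s.ncard using Nat.strong_induction_on generalizing s U v with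
  | _ m ih =>
  by_cases hs0 : ∀ w ∈ s, w = 0
  · obtain ⟨u, huU, hu, huv⟩ :=
      hU.exists_map_eq_zero_polar_eq_one hvU fun h => hv (h ▸ zero_mem _)
    exact ⟨u, huU, hu, huv, fun w hw => by rw [hs0 w hw, polar_zero_right]⟩
  push Not at hs0
  obtain ⟨w, hws, hw⟩ := hs0
  obtain ⟨p, hpU, hp, hpw⟩ := hU.exists_map_eq_zero_polar_eq_one (hsU hws) hw
  -- `φ` maps `w^⊥` into the orthogonal complement of the plane spanned by `p` and `w`
  let φ : V → V := fun x => x - polar q p x • w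
  have hφS : ∀ x ∈ S, φ x ∈ S := fun x hx => sub_mem hx (smul_mem _ _ (hsS hws))
  have hφU : ∀ x ∈ S, x ∈ U →
      φ x ∈ U ⊓ LinearMap.ker (polarBilin q p) ⊓ LinearMap.ker (polarBilin q w) :=
    fun x hxS hxU => sub_polar_smul_mem_inf_ker (hsU hws) hxU hpw
      (hS w (hsS hws) w (hsS hws)) (hS w (hsS hws) x hxS)
  have hφs : φ '' (s \ {w}) ⊆ span F s := Set.image_subset_iff.2 fun x hx =>
    sub_mem (subset_span hx.1) (smul_mem _ _ (subset_span hws))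
  obtain ⟨u, huU', hu, huv, hus⟩ := ih _ ((Set.ncard_image_le hs.sdiff).trans_lt
      (hm ▸ Set.ncard_sdiff_singleton_lt_of_mem hws hs)) (hs.sdiff.image φ)
    (Set.image_subset_iff.2 fun x hx => hφS x (hsS hx.1)) (hU.inf_ker hpU (hsU hws) hp hpw)
    (Set.image_subset_iff.2 fun x hx => hφU x (hsS hx.1) (hsU hx.1)) (hφS v hvS) (hφU v hvS hvU)
    (fun h => hv <| by
      simpa [φ] using add_mem (span_le.2 hφs h) (smul_mem _ (polar q p v) (subset_span hws)))
    rfl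
  simp only [mem_inf, mem_ker_polarBilin] at huU'
  obtain ⟨⟨huU, -⟩, hwu⟩ := huU'
  have huw : polar q u w = 0 := by rw [polar_comm, hwu]
  have hφ : ∀ x, polar q u (φ x) = polar q u x := fun x => by
    simp only [φ, polar_sub_right, polar_smul_right, huw, smul_zero, sub_zero]
  refine ⟨u, huU, hu, by rwa [← hφ], fun x hx => ?_⟩
  rcases eq_or_ne x w with rfl | hxw
  · exact huw
  · rw [← hφ]
    exact hus _ (Set.mem_image_of_mem φ ⟨hx, hxw⟩)

theorem IsHyperbolic.exists_map_eq_zero_polar_eq_one_of_linearIndependent [CharP F 2]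
    (hV : IsHyperbolic q ⊤) {ι : Type*} [Finite ι] {v : ι → V} (hli : LinearIndependent F v)
    (hv : ∀ i j, polar q (v i) (v j) = 0) (i : ι) :
    ∃ u, q u = 0 ∧ polar q u (v i) = 1 ∧ ∀ j ≠ i, polar q u (v j) = 0 := by
  have hS : IsTotallyIsotropic q (span F (Set.range v)) := by
    refine IsTotallyIsotropic.span ?_
    rintro _ ⟨j, rfl⟩ _ ⟨j', rfl⟩
    exact hv j j'
  obtain ⟨u, -, hu, hui, hus⟩ := hV.exists_map_eq_zero_polar_eq_one_of_notMem_span hS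
    (Set.toFinite _) ((Set.image_subset_range _ _).trans subset_span) (Set.subset_univ _)
    (subset_span ⟨i, rfl⟩) mem_top (hli.notMem_span_image (s := {i}ᶜ) (by simp))
  exact ⟨u, hu, hui, fun j hj => hus _ ⟨j, Set.mem_compl_singleton_iff.2 hj, rfl⟩⟩

theorem polar_update_eq_zero {ι : Type*} [DecidableEq ι] {v : ι → V}
    (hv : ∀ i j, polar q (v i) (v j) = 0) {i : ι} {x : V} (hx : q x = 0)
    (hxv : ∀ j ≠ i, polar q x (v j) = 0) (j j' : ι) :
    polar q (Function.update v i x j) (Function.update v i x j') = 0 := by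
  by_cases hj : j = i <;> by_cases hj' : j' = i <;>
    simp [hj, hj', hv, hxv, polar_comm q (v j) x,
      polar_self_eq_zero_of_map_eq_zero hx]

theorem card_filter_update_lt {ι β : Type*} [Fintype ι] [DecidableEq ι] (P : β → Prop)
    [DecidablePred P] {f : ι → β} {i : ι} {b : β} (hi : P (f i)) (hb : ¬P b) :
    (Finset.univ.filter fun j => P (Function.update f i b j)).card <
      (Finset.univ.filter fun j => P (f j)).card := by
  refine Finset.card_lt_card ((Finset.ssubset_iff_of_subset fun j => ?_).2
    ⟨i, by simpa using hi, by simpa using hb⟩)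
  by_cases hj : j = i <;> simp [hj, hb]

theorem ιMulti_mem_grassmann_of_polar_eq_zero [CharP F 2] (hV : IsHyperbolic q ⊤) {k : ℕ}
    (v : Fin k → V) (hv : ∀ i j, polar q (v i) (v j) = 0) :
    ExteriorAlgebra.ιMulti F k v ∈ grassmann F V (TotSingQ F V q) k := by
  classical
  induction hm : (Finset.univ.filter fun i => q (v i) ≠ 0).card using Nat.strong_induction_on
    generalizing v with
  | _ m ih =>
  by_cases hli : LinearIndependent F v
  swap
  · rw [AlternatingMap.map_linearDependent _ _ hli]
    exact zero_mem _
  by_cases hsing : ∀ i, q (v i) = 0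
  · exact subset_span ⟨v, fun _ => mem_top, hli, totSingQ_span_range hv hsing, rfl⟩
  push Not at hsing
  obtain ⟨i, hi⟩ := hsing
  obtain ⟨u, hu, hui, huv⟩ := hV.exists_map_eq_zero_polar_eq_one_of_linearIndependent hli hv i
  set a := q (v i) • u
  set b := v i - a
  have ha : q a = 0 := by rw [QuadraticMap.map_smul, hu, smul_zero]
  have hav : ∀ j ≠ i, polar q a (v j) = 0 := fun j hj => by
    rw [polar_smul_left, huv j hj, smul_zero]
  have hb : q b = 0 := map_sub_smul_eq_zero hu hui
  have hbv : ∀ j ≠ i, polar q b (v j) = 0 := fun j hj => by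
    rw [polar_sub_left, hv, hav j hj, sub_zero]
  have hsplit : ExteriorAlgebra.ιMulti F k v = ExteriorAlgebra.ιMulti F k (Function.update v i a)
      + ExteriorAlgebra.ιMulti F k (Function.update v i b) := by
    rw [← AlternatingMap.map_update_add, add_sub_cancel, Function.update_eq_self]
  rw [hsplit]
  exact add_mem
    (ih _ (hm ▸ card_filter_update_lt (fun x => q x ≠ 0) hi (not_not.2 ha)) _
      (polar_update_eq_zero hv ha hav) rfl)
    (ih _ (hm ▸ card_filter_update_lt (fun x => q x ≠ 0) hi (not_not.2 hb)) _
      (polar_update_eq_zero hv hb hbv) rfl)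

theorem isLagrangian_top_span_range {ι : Type*} [Fintype ι] [DecidableEq ι] {e f : ι → V}
    (he : ∀ i, q (e i) = 0) (hee : ∀ i j, polar q (e i) (e j) = 0)
    (hfe : ∀ i j, polar q (f i) (e j) = if i = j then 1 else 0)
    (hspan : span F (Set.range (Sum.elim e f)) = ⊤) :
    IsLagrangian q ⊤ (span F (Set.range e)) := by
  refine ⟨le_top, totSingQ_span_range hee he, fun x _ hx => ?_⟩
  obtain ⟨c, rfl⟩ := (mem_span_range_iff_exists_fun F).1 (hspan ▸ mem_top (x := x))
  have hc : ∀ j, c (Sum.inr j) = 0 := fun j => by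
    have h := hx (e j) (subset_span ⟨j, rfl⟩)
    rw [← polarBilin_apply_apply, map_sum, LinearMap.sum_apply] at h
    simpa [Fintype.sum_sum_type, hee, hfe] using h
  rw [Fintype.sum_sum_type]
  simp only [hc, zero_smul, Finset.sum_const_zero, add_zero, Sum.elim_inl]
  exact sum_mem fun i _ => smul_mem _ _ (subset_span ⟨i, rfl⟩)

theorem isHyperbolic_top_of_hasWittDecomp [FiniteDimensional F V] {n : ℕ}
    (hndeg : ∀ v : V, q v = 0 → (∀ w : V, polarF F V q v w = 0) → v = 0)
    (hdec : HasWittDecomp F V (polarF F V q) (fun v => q v = 0) (radSetQ F V q) n 0 0) :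
    IsHyperbolic q ⊤ := by
  obtain ⟨W, W₀, R, hint, horth, hplanes, -, hW₀, -, hR⟩ := hdec
  choose e f hW he hf hef using hplanes
  have heW : ∀ i, e i ∈ W i := fun i => hW i ▸ subset_span (by simp)
  have hfW : ∀ i, f i ∈ W i := fun i => hW i ▸ subset_span (by simp)
  have hWW : ∀ i j, i ≠ j → ∀ x ∈ W i, ∀ y ∈ W j, polar q x y = 0 :=
    fun i j hij => horth (.inl i) (.inl j) (by simpa using hij)
  refine ⟨fun x _ hx hxV => hndeg x hx fun y => hxV y mem_top,
    _, isLagrangian_top_span_range (f := f) he (fun i j => ?_) (fun i j => ?_) ?_⟩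
  · rcases eq_or_ne i j with rfl | hij
    exacts [polar_self_eq_zero_of_map_eq_zero (he i), hWW i j hij _ (heW i) _ (heW j)]
  · split_ifs with hij
    · subst hij
      rw [polar_comm]
      exact hef i
    · exact hWW i j hij _ (hfW i) _ (heW j)
  refine eq_top_iff.2 (hint.submodule_iSup_eq_top.symm.le.trans (iSup_le ?_))
  rintro (i | j)
  · rw [Sum.elim_inl, hW i]
    exact span_mono (Set.insert_subset ⟨.inl i, rfl⟩ (Set.singleton_subset_iff.2 ⟨.inr i, rfl⟩))
  · fin_cases j
    · simp [Submodule.finrank_eq_zero.1 hW₀]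
    · simp [Submodule.finrank_eq_zero.1 hR]

theorem TotSingQ.totSingB {W : Submodule F V} (hW : TotSingQ F V q W) :
    TotSingB F V (polarF F V q) W :=
  fun x hx y hy => polar_eq_zero_of_map_eq_zero (hW x hx) (hW y hy) (hW _ (add_mem hx hy))

theorem grassmann_mono {P P' : Submodule F V → Prop} (h : ∀ W, P W → P' W) (k : ℕ) :
    grassmann F V P k ≤ grassmann F V P' k :=
  span_mono fun _ ⟨v, hvU, hli, hP, hx⟩ => ⟨v, hvU, hli, h _ hP, hx⟩

end PolarGrass

open PolarGrass Module in
theorem stmt16_general (F : Type*) [Field F] (V : Type*) [AddCommGroup V] [Module F V]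
    [FiniteDimensional F V]
    (hchar : ringChar F = 2)
    (q : QuadraticForm F V)
    (hndeg : ∀ v : V, q v = 0 → (∀ w : V, polarF F V q v w = 0) → v = 0)
    (n : ℕ)
    (hdec : HasWittDecomp F V (polarF F V q) (fun v => q v = 0) (radSetQ F V q) n 0 0) :
    ∀ k : ℕ, 1 ≤ k → k ≤ n →
      grassmann F V (TotSingQ F V q) k = grassmann F V (TotSingB F V (polarF F V q)) k := by
  have : CharP F 2 := ringChar.of_eq hchar
  have hV := isHyperbolic_top_of_hasWittDecomp hndeg hdec
  intro k _ _
  refine le_antisymm (grassmann_mono (fun _ => TotSingQ.totSingB) k) (Submodule.span_le.2 ?_)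
  rintro _ ⟨v, -, -, hW, rfl⟩
  exact ιMulti_mem_grassmann_of_polar_eq_zero hV v fun i j =>
    hW _ (Submodule.subset_span ⟨i, rfl⟩) _ (Submodule.subset_span ⟨j, rfl⟩)

open PolarGrass Module in
/-- `char F = 2`, a non-degenerate quadratic form with `N = 2n`, Witt index
`n ≥ 2` (anisotropic defect 0). For `1 ≤ k ≤ n` the Grassmann image coincides with the
symplectic Grassmann image of the polarization `f_q`. -/
theorem stmt16 (F : Type*) [Field F] (V : Type*) [AddCommGroup V] [Module F V]
    [FiniteDimensional F V]
    (hchar : ringChar F = 2)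
    (q : QuadraticForm F V)
    (hndeg : ∀ v : V, q v = 0 → (∀ w : V, polarF F V q v w = 0) → v = 0)
    (n : ℕ) (hn : 2 ≤ n)
    (hdec : HasWittDecomp F V (polarF F V q) (fun v => q v = 0) (radSetQ F V q) n 0 0)
    (hNV : Module.finrank F V = 2 * n) :
    ∀ k : ℕ, 1 ≤ k → k ≤ n →
      grassmann F V (TotSingQ F V q) k = grassmann F V (TotSingB F V (polarF F V q)) k :=
  stmt16_general F V hchar q hndeg n hdec
end
end
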